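/- Let a = (a₁, 1/2) and b = (b₁, b₂) with a₁, b₁, b₂ ∈ {0, 1/2}. Then Θ_{(a,b)}(τ) tends to 0 uniformly as the lower-right entry of Im τ tends to infinity over Minkowski-reduced matrices: for every ε > 0 there exists T > 0 such that for every τ ∈ H₂ whose imaginary part Y = [[y₁, y₂],[y₂, y₄]] satisfies 2|y₂| ≤ y₁ ≤ y₄, y₁ ≥ √3/2, and y₄ ≥ T, one has |Θ_{(a,b)}(τ)| < ε. (This expresses that, in the fundamental domain, the theta constants with second coordinate of a equal to 1/2 tend to 0 as one approaches the boundary of the Satake compactification.) -/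

import Mathlib

open scoped BigOperators
open Complex Matrix

noncomputable section

/-- `τ` belongs to the Siegel upper half-space of degree 2: it is a symmetric
`2 × 2` complex matrix whose imaginary part is positive definite. -/
def IsSiegel (τ : Matrix (Fin 2) (Fin 2) ℂ) : Prop :=
  τ.IsSymm ∧ (Matrix.of fun i j => (τ i j).im).PosDef

/-- The term of index `n ∈ ℤ²` of the theta series with characteristic `(a, b)`. -/
def thetaTerm (a b : Fin 2 → ℝ) (τ : Matrix (Fin 2) (Fin 2) ℂ) (n : Fin 2 → ℤ) : ℂ :=
  Complex.exp (2 * Real.pi * Complex.I *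
      (∑ i, ∑ j, ((n i : ℂ) + (a i : ℂ)) * τ i j * ((n j : ℂ) + (a j : ℂ)))
    + 2 * Real.pi * Complex.I * (∑ i, (n i : ℂ) * (b i : ℂ)))

/-- The theta constant `Θ_{(a,b)}(τ)`. -/
def Theta (a b : Fin 2 → ℝ) (τ : Matrix (Fin 2) (Fin 2) ℂ) : ℂ :=
  ∑' n : Fin 2 → ℤ, thetaTerm a b τ n

/-- `(a, b)` is a half-integer characteristic when all entries lie in `{0, 1/2}`. -/
def IsHalf (a : Fin 2 → ℝ) : Prop := ∀ i, a i = 0 ∨ a i = 1 / 2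

/-!
For a Minkowski-reduced imaginary part `Y`, the cross term is dominated by the diagonal, giving
`xᵀ Y x ≥ (y₁ x₁² + y₄ x₂²) / 2`. The second coordinate of `n + a` lies in `ℤ + 1/2`, so
`x₂² ≥ 1/4`, and part of `y₄ x₂²` can be spent to extract the factor `exp (-π y₄ / 8)`. What is
left of each term is bounded, uniformly in `τ`, by a term of a fixed convergent Gaussian series
over `ℤ²`, so `|Θ| ≤ C exp (-π y₄ / 8)`.
-/

open Real Filter Topology

lemma norm_thetaTerm (a b : Fin 2 → ℝ) (τ : Matrix (Fin 2) (Fin 2) ℂ) (n : Fin 2 → ℤ) :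
    ‖thetaTerm a b τ n‖ = rexp (-(2 * π) *
      ∑ i, ∑ j, ((n i : ℝ) + a i) * (τ i j).im * ((n j : ℝ) + a j)) := by
  rw [thetaTerm, Complex.norm_exp]
  congr 1
  simp [Fin.sum_univ_two, Complex.add_re, Complex.mul_re, Complex.mul_im]

lemma reduced_quadForm_ge {y₁ y₂ y₄ : ℝ} (h₂ : 2 * |y₂| ≤ y₁) (h₁₄ : y₁ ≤ y₄) (x₁ x₂ : ℝ) :
    y₁ / 2 * x₁ ^ 2 + y₄ / 2 * x₂ ^ 2 ≤ y₁ * x₁ ^ 2 + 2 * y₂ * x₁ * x₂ + y₄ * x₂ ^ 2 := by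
  have hy₁ : 0 ≤ y₁ := le_trans (by positivity) h₂
  have hcross : -(y₁ * |x₁ * x₂|) ≤ 2 * y₂ * x₁ * x₂ := by
    have : |2 * y₂ * x₁ * x₂| ≤ y₁ * |x₁ * x₂| := by
      rw [mul_assoc _ x₁, abs_mul, abs_mul, abs_two]
      gcongr
    linarith [neg_abs_le (2 * y₂ * x₁ * x₂)]
  have hamgm : 2 * |x₁ * x₂| ≤ x₁ ^ 2 + x₂ ^ 2 := by
    rw [abs_mul]
    nlinarith [sq_nonneg (|x₁| - |x₂|), sq_abs x₁, sq_abs x₂]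
  nlinarith [mul_le_mul_of_nonneg_left hamgm hy₁, mul_le_mul_of_nonneg_right h₁₄ (sq_nonneg x₂)]

lemma quarter_le_sq_int_add_half (m : ℤ) : (1 / 4 : ℝ) ≤ ((m : ℝ) + 1 / 2) ^ 2 := by
  have : (0 : ℝ) ≤ m * (m + 1) := by
    rcases le_or_gt 0 m with h | h
    · have : (0 : ℝ) ≤ m := by exact_mod_cast h
      positivity
    · have : (m : ℝ) + 1 ≤ 0 := by exact_mod_cast h
      nlinarith
  nlinarith

lemma summable_fin_two_mul {f g : ℤ → ℝ} (hf : Summable f) (hg : Summable g)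
    (hf₀ : 0 ≤ f) (hg₀ : 0 ≤ g) : Summable fun n : Fin 2 → ℤ => f (n 0) * g (n 1) :=
  (finTwoArrowEquiv ℤ).summable_iff.mpr (hf.mul_of_nonneg hg hf₀ hg₀)

section
variable {a₁ t : ℝ} {b : Fin 2 → ℝ} {τ : Matrix (Fin 2) (Fin 2) ℂ}

lemma norm_thetaTerm_le (hτ : τ.IsSymm) (ht₁ : 2 * t ≤ (τ 0 0).im)
    (h₂ : 2 * |(τ 0 1).im| ≤ (τ 0 0).im) (h₁₄ : (τ 0 0).im ≤ (τ 1 1).im) (n : Fin 2 → ℤ) :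
    ‖thetaTerm ![a₁, 1 / 2] b τ n‖ ≤ rexp (-(π / 8) * (τ 1 1).im) *
      (rexp (-π * (n 0 + a₁) ^ 2 * t) * rexp (-π * (n 1 + 1 / 2) ^ 2 * t)) := by
  have hsymm : (τ 1 0).im = (τ 0 1).im := by rw [← hτ.apply 0 1]
  rw [norm_thetaTerm, ← Real.exp_add, ← Real.exp_add, Real.exp_le_exp]
  simp only [Fin.sum_univ_two, Matrix.cons_val_zero, Matrix.cons_val_one, hsymm]
  set x₁ : ℝ := n 0 + a₁
  set x₂ : ℝ := n 1 + 1 / 2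
  have hx₂ : 1 / 4 ≤ x₂ ^ 2 := quarter_le_sq_int_add_half (n 1)
  have hy₁ : 0 ≤ (τ 0 0).im := le_trans (by positivity) h₂
  have hquad : t * x₁ ^ 2 + t * x₂ ^ 2 + (τ 1 1).im / 8 ≤ 2 * ((τ 0 0).im * x₁ ^ 2 +
      2 * (τ 0 1).im * x₁ * x₂ + (τ 1 1).im * x₂ ^ 2) := by
    nlinarith [reduced_quadForm_ge h₂ h₁₄ x₁ x₂,
      mul_le_mul_of_nonneg_right (show t ≤ (τ 0 0).im by linarith) (sq_nonneg x₁),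
      mul_le_mul_of_nonneg_right (ht₁.trans h₁₄) (sq_nonneg x₂),
      mul_le_mul_of_nonneg_left hx₂ (hy₁.trans h₁₄)]
  have := mul_le_mul_of_nonneg_left hquad pi_pos.le
  linarith

lemma norm_Theta_le (hτ : τ.IsSymm) (ht : 0 < t) (ht₁ : 2 * t ≤ (τ 0 0).im)
    (h₂ : 2 * |(τ 0 1).im| ≤ (τ 0 0).im) (h₁₄ : (τ 0 0).im ≤ (τ 1 1).im) :
    ‖Theta ![a₁, 1 / 2] b τ‖ ≤ rexp (-(π / 8) * (τ 1 1).im) *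
      ∑' n : Fin 2 → ℤ, rexp (-π * (n 0 + a₁) ^ 2 * t) * rexp (-π * (n 1 + 1 / 2) ^ 2 * t) := by
  have hmaj := (summable_fin_two_mul (HurwitzZeta.hasSum_int_evenKernel a₁ ht).summable
    (HurwitzZeta.hasSum_int_evenKernel (1 / 2) ht).summable (fun _ => (exp_pos _).le)
    (fun _ => (exp_pos _).le)).mul_left (rexp (-(π / 8) * (τ 1 1).im))
  rw [← tsum_mul_left]
  exact tsum_of_norm_bounded hmaj.hasSum (norm_thetaTerm_le hτ ht₁ h₂ h₁₄)

end

lemma eventually_exp_neg_mul_mul_lt {c : ℝ} (hc : 0 < c) (K : ℝ) {ε : ℝ} (hε : 0 < ε) :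
    ∀ᶠ y in atTop, rexp (-c * y) * K < ε := by
  have h : Tendsto (fun y => rexp (-c * y) * K) atTop (𝓝 (0 * K)) := by
    simp_rw [neg_mul]
    exact (tendsto_exp_neg_atTop_nhds_zero.comp (tendsto_id.const_mul_atTop hc)).mul_const K
  rw [zero_mul] at h
  exact h.eventually (gt_mem_nhds hε)

theorem theta_tendsto_zero_boundary_general (a₁ b₁ b₂ : ℝ) :
    ∀ ε > 0, ∃ T > 0, ∀ τ : Matrix (Fin 2) (Fin 2) ℂ, IsSiegel τ →
      2 * |(τ 0 1).im| ≤ (τ 0 0).im →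
      (τ 0 0).im ≤ (τ 1 1).im →
      Real.sqrt 3 / 2 ≤ (τ 0 0).im →
      T ≤ (τ 1 1).im →
      ‖Theta ![a₁, 1 / 2] ![b₁, b₂] τ‖ < ε := by
  intro ε hε
  have ht : 0 < √3 / 4 := by positivity
  obtain ⟨T, hT⟩ := eventually_atTop.1 (eventually_exp_neg_mul_mul_lt (by positivity : 0 < π / 8)
    (∑' n : Fin 2 → ℤ, rexp (-π * (n 0 + a₁) ^ 2 * (√3 / 4)) *
      rexp (-π * (n 1 + 1 / 2) ^ 2 * (√3 / 4))) hε)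
  refine ⟨max T 1, by positivity, fun τ hτ h₂ h₁₄ hy₁ hy₄ => ?_⟩
  calc ‖Theta ![a₁, 1 / 2] ![b₁, b₂] τ‖
      ≤ _ := norm_Theta_le hτ.1 ht (by linarith) h₂ h₁₄
    _ < ε := hT _ (le_of_max_le_left hy₄)

/-- A half-integer theta constant whose characteristic has second `a`-coordinate
equal to `1/2` tends to `0` uniformly on Minkowski-reduced matrices as the
lower-right entry of the imaginary part tends to infinity. -/
theorem theta_tendsto_zero_boundary (a₁ b₁ b₂ : ℝ)
    (ha₁ : a₁ = 0 ∨ a₁ = 1 / 2) (hb₁ : b₁ = 0 ∨ b₁ = 1 / 2) (hb₂ : b₂ = 0 ∨ b₂ = 1 / 2) :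
    ∀ ε > 0, ∃ T > 0, ∀ τ : Matrix (Fin 2) (Fin 2) ℂ, IsSiegel τ →
      2 * |(τ 0 1).im| ≤ (τ 0 0).im →
      (τ 0 0).im ≤ (τ 1 1).im →
      Real.sqrt 3 / 2 ≤ (τ 0 0).im →
      T ≤ (τ 1 1).im →
      ‖Theta ![a₁, 1 / 2] ![b₁, b₂] τ‖ < ε :=
  theta_tendsto_zero_boundary_general a₁ b₁ b₂
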